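/- There exists ν₊ > 0 such that for every ν ∈ (0, ν₊] the first component of G_ν(x, y, z) is strictly positive for every (x, y, z) ∈ C_ν^{c+} := [√ν/2, √(ν/2)] × [−ν^{3/2}, ν^{3/2}] × [−ν^{3/2}, ν^{3/2}], and strictly negative for every (x, y, z) ∈ C_ν^{c−} := [−√(ν/2), −√ν/2] × [−ν^{3/2}, ν^{3/2}] × [−ν^{3/2}, ν^{3/2}]. -/
import Mathlib


open Set

/-- The vector field in `ℝ³`:
`G_ν(x,y,z) = (x(ν − x²) + x³(y+z) + x(y²+z²) + yz, y + x²(y+z) + x⁴ + yz, −z + x²(y+z) + x⁴ + yz)`. -/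
noncomputable def G (ν : ℝ) (p : ℝ × ℝ × ℝ) : ℝ × ℝ × ℝ :=
  (p.1 * (ν - p.1 ^ 2) + p.1 ^ 3 * (p.2.1 + p.2.2) + p.1 * (p.2.1 ^ 2 + p.2.2 ^ 2)
      + p.2.1 * p.2.2,
   p.2.1 + p.1 ^ 2 * (p.2.1 + p.2.2) + p.1 ^ 4 + p.2.1 * p.2.2,
   -p.2.2 + p.1 ^ 2 * (p.2.1 + p.2.2) + p.1 ^ 4 + p.2.1 * p.2.2)

/-- The box `S_θ = [−√(2θ), √(2θ)] × [−θ^{3/2}, θ^{3/2}] × [−θ^{3/2}, θ^{3/2}]`. -/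
noncomputable def S (θ : ℝ) : Set (ℝ × ℝ × ℝ) :=
  Icc (-Real.sqrt (2 * θ)) (Real.sqrt (2 * θ)) ×ˢ
    (Icc (-θ ^ ((3 : ℝ) / 2)) (θ ^ ((3 : ℝ) / 2)) ×ˢ
      Icc (-θ ^ ((3 : ℝ) / 2)) (θ ^ ((3 : ℝ) / 2)))

/-- The box `C_ν^{c+} = [√ν/2, √(ν/2)] × [−ν^{3/2}, ν^{3/2}]²`. -/
noncomputable def Ccp (ν : ℝ) : Set (ℝ × ℝ × ℝ) :=
  Icc (Real.sqrt ν / 2) (Real.sqrt (ν / 2)) ×ˢ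
    (Icc (-ν ^ ((3 : ℝ) / 2)) (ν ^ ((3 : ℝ) / 2)) ×ˢ
      Icc (-ν ^ ((3 : ℝ) / 2)) (ν ^ ((3 : ℝ) / 2)))

/-- The box `C_ν^{c−} = [−√(ν/2), −√ν/2] × [−ν^{3/2}, ν^{3/2}]²`. -/
noncomputable def Ccm (ν : ℝ) : Set (ℝ × ℝ × ℝ) :=
  Icc (-Real.sqrt (ν / 2)) (-(Real.sqrt ν / 2)) ×ˢ
    (Icc (-ν ^ ((3 : ℝ) / 2)) (ν ^ ((3 : ℝ) / 2)) ×ˢ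
      Icc (-ν ^ ((3 : ℝ) / 2)) (ν ^ ((3 : ℝ) / 2)))

lemma keyPos (r x y z : ℝ) (hr : 0 < r) (hr1 : r ≤ 1/10)
    (hx1 : r/2 ≤ x) (hx2 : x^2 ≤ r^2/2)
    (hy1 : -r^3 ≤ y) (hy2 : y ≤ r^3) (hz1 : -r^3 ≤ z) (hz2 : z ≤ r^3) :
    r^3/8 < x * (r^2 - x^2) + x^3 * (y + z) + x * (y^2 + z^2) + y * z := by
  have hx0 : 0 < x := lt_of_lt_of_le (by linarith) hx1
  have hxr : x ≤ r := by nlinarith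
  have hx3 : x^3 ≤ r^3 := by nlinarith
  have h1 : r/2 * (r^2/2) ≤ x * (r^2 - x^2) :=
    mul_le_mul hx1 (by linarith) (by positivity) hx0.le
  have h2 : -(2*r^6) ≤ x^3 * (y + z) := by
    nlinarith [mul_nonneg (pow_pos hx0 3).le (show (0:ℝ) ≤ y + z + 2*r^3 by linarith),
      mul_nonneg (show (0:ℝ) ≤ 2*r^3 by positivity) (show (0:ℝ) ≤ r^3 - x^3 by linarith)]
  have h3 : (0:ℝ) ≤ x * (y^2 + z^2) := by positivity
  have h4 : -(r^6) ≤ y * z := by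
    nlinarith [mul_nonneg (show (0:ℝ) ≤ r^3 + y by linarith) (show (0:ℝ) ≤ r^3 + z by linarith),
      mul_nonneg (show (0:ℝ) ≤ r^3 - y by linarith) (show (0:ℝ) ≤ r^3 - z by linarith)]
  have h5 : r^3 ≤ 1/1000 := by nlinarith
  have h6 : 3*r^6 + 2*r^6 < r^3/4 - r^3/8 := by nlinarith [pow_pos hr 3]
  nlinarith

lemma keyNeg (r x y z : ℝ) (hr : 0 < r) (hr1 : r ≤ 1/10)
    (hx1 : x ≤ -(r/2)) (hx2 : x^2 ≤ r^2/2)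
    (hy1 : -r^3 ≤ y) (hy2 : y ≤ r^3) (hz1 : -r^3 ≤ z) (hz2 : z ≤ r^3) :
    x * (r^2 - x^2) + x^3 * (y + z) + x * (y^2 + z^2) + y * z < 0 := by
  have hx0 : x < 0 := lt_of_le_of_lt hx1 (by linarith)
  have hxr : -r ≤ x := by nlinarith
  have hx3 : -(r^3) ≤ x^3 := by nlinarith
  have hx3n : x^3 ≤ 0 := by nlinarith [mul_nonpos_of_nonpos_of_nonneg hx0.le (sq_nonneg x)]
  have h1 : r/2 * (r^2/2) ≤ (-x) * (r^2 - x^2) :=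
    mul_le_mul (by linarith) (by linarith) (by positivity) (by linarith)
  have h2 : x^3 * (y + z) ≤ 2*r^6 := by
    nlinarith [mul_nonneg (show (0:ℝ) ≤ -(x^3) by linarith) (show (0:ℝ) ≤ y + z + 2*r^3 by linarith),
      mul_nonneg (show (0:ℝ) ≤ 2*r^3 by positivity) (show (0:ℝ) ≤ r^3 + x^3 by linarith)]
  have h3 : x * (y^2 + z^2) ≤ 0 := by
    have : (0:ℝ) ≤ y^2 + z^2 := by positivity
    exact mul_nonpos_of_nonpos_of_nonneg hx0.le this
  have h4 : y * z ≤ r^6 := by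
    nlinarith [mul_nonneg (show (0:ℝ) ≤ r^3 - y by linarith) (show (0:ℝ) ≤ r^3 + z by linarith),
      mul_nonneg (show (0:ℝ) ≤ r^3 + y by linarith) (show (0:ℝ) ≤ r^3 - z by linarith)]
  have h5 : r^3 ≤ 1/1000 := by nlinarith
  have h6 : 3*r^6 < r^3/4 := by nlinarith [pow_pos hr 3]
  nlinarith


/-- There exists `ν₊ > 0` such that for every `ν ∈ (0, ν₊]` the first component of
`G_ν` is strictly positive on `C_ν^{c+}` and strictly negative on `C_ν^{c−}`. -/
theorem stmt16 :
    ∃ νp : ℝ, 0 < νp ∧ ∀ ν ∈ Ioc (0 : ℝ) νp,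
      (∀ p ∈ Ccp ν, 0 < (G ν p).1) ∧ (∀ p ∈ Ccm ν, (G ν p).1 < 0) := by
  refine ⟨1/100, by norm_num, fun ν hν => ?_⟩
  obtain ⟨hν0, hν1⟩ := hν
  set r := Real.sqrt ν with hrdef
  have hr : 0 < r := Real.sqrt_pos.mpr hν0
  have hr2 : r ^ 2 = ν := Real.sq_sqrt hν0.le
  have hr1 : r ≤ 1/10 := by nlinarith
  have hs : ν ^ ((3:ℝ)/2) = r ^ 3 := by
    rw [show ((3:ℝ)/2) = (3:ℕ) * (1/2 : ℝ) by norm_num, Real.rpow_mul hν0.le,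
      Real.rpow_natCast, ← Real.sqrt_eq_rpow]
    have hkey : (r ^ 3) ^ 2 = ν ^ 3 := by
      linear_combination (r ^ 4 + r ^ 2 * ν + ν ^ 2) * hr2
    rw [← hkey, Real.sqrt_sq (by positivity)]
  have hs2 : Real.sqrt (ν/2) ^ 2 = ν/2 := Real.sq_sqrt (by linarith)
  constructor
  · rintro ⟨x, y, z⟩ ⟨⟨hx1, hx2⟩, ⟨hy1, hy2⟩, hz1, hz2⟩
    rw [hs] at hy1 hy2 hz1 hz2
    have hx0 : 0 < x := lt_of_lt_of_le (by positivity) hx1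
    have hxsq : x ^ 2 ≤ r ^ 2 / 2 := by nlinarith [Real.sqrt_nonneg (ν/2)]
    have := keyPos r x y z hr hr1 hx1 hxsq hy1 hy2 hz1 hz2
    show 0 < x * (ν - x ^ 2) + x ^ 3 * (y + z) + x * (y ^ 2 + z ^ 2) + y * z
    rw [← hr2]
    nlinarith [pow_pos hr 3]
  · rintro ⟨x, y, z⟩ ⟨⟨hx1, hx2⟩, ⟨hy1, hy2⟩, hz1, hz2⟩
    rw [hs] at hy1 hy2 hz1 hz2
    have hxsq : x ^ 2 ≤ r ^ 2 / 2 := by nlinarith [Real.sqrt_nonneg (ν/2)]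
    have := keyNeg r x y z hr hr1 hx2 hxsq hy1 hy2 hz1 hz2
    show x * (ν - x ^ 2) + x ^ 3 * (y + z) + x * (y ^ 2 + z ^ 2) + y * z < 0
    rw [← hr2]
    exact this
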